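/- Let X₁, X₂ and Y be Banach spaces, let X = X₁ ⊕_1 X₂, and for j = 1, 2 let Γ_j be a boundary for X_j contained in the unit sphere of X_j*. Let Γ ⊆ S(X*) consist of all functionals of the form (x₁, x₂) ↦ x₁*(x₁) with x₁* ∈ Γ₁ together with all functionals of the form (x₁, x₂) ↦ x₂*(x₂) with x₂* ∈ Γ₂. If a bounded linear operator T : X → Y is rigidly narrow with respect to Γ, then the restrictions T₁ and T₂ of T are rigid strong Daugavet operators. -/

import Mathlib

/-- A bounded linear operator `T : X → Y` is a *rigid strong Daugavet operator* if for
every `x, y` in the unit sphere of `X` there is `z` in the unit sphere with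
`‖x + z‖ = 2` and `T (y - z) = 0`. -/
def IsRigidStrongDaugavet {X Y : Type*} [NormedAddCommGroup X] [NormedSpace ℝ X]
    [NormedAddCommGroup Y] [NormedSpace ℝ Y] (T : X →L[ℝ] Y) : Prop :=
  ∀ x y : X, ‖x‖ = 1 → ‖y‖ = 1 →
    ∃ z : X, ‖z‖ = 1 ∧ ‖x + z‖ = 2 ∧ T (y - z) = 0

/-- `T` is *rigidly narrow with respect to* a set `Γ` of functionals if for every
`x, y` in the unit sphere and every `g ∈ Γ` there is `z` in the unit sphere with
`‖x + z‖ = 2`, `T (y - z) = 0` and `g (y - z) = 0`. -/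
def IsRigidlyNarrowWrt {X Y : Type*} [NormedAddCommGroup X] [NormedSpace ℝ X]
    [NormedAddCommGroup Y] [NormedSpace ℝ Y] (T : X →L[ℝ] Y)
    (Γ : Set (X →L[ℝ] ℝ)) : Prop :=
  ∀ x y : X, ‖x‖ = 1 → ‖y‖ = 1 → ∀ g ∈ Γ,
    ∃ z : X, ‖z‖ = 1 ∧ ‖x + z‖ = 2 ∧ T (y - z) = 0 ∧ g (y - z) = 0

/-!
Only the fact that `X₁` (and likewise `X₂`) is an L-summand of `X = X₁ ⊕₁ X₂` matters: with the
projection `π` and inclusion `ι`, `‖x‖ = ‖π x‖ + ‖x - ι (π x)‖`. Given `x, y ∈ S(X₁)`, pick `f` in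
the boundary with `f y = 1`. Rigid narrowness for `ι x`, `ι y` and `f ∘ π` yields `z ∈ S(X)` with
`f (π z) = f y = 1`, so `‖π z‖ ≥ 1 = ‖z‖`; the L-decomposition then forces `z = ι (π z)`, and
`π z` is the witness required for the restriction `T ∘ ι`.
-/

section LSummand

variable {X E Y : Type*}
    [NormedAddCommGroup X] [NormedSpace ℝ X]
    [NormedAddCommGroup E] [NormedSpace ℝ E]
    [NormedAddCommGroup Y] [NormedSpace ℝ Y]
    {π : X →L[ℝ] E} {ι : E →L[ℝ] X}

theorem norm_section_eq_of_norm_eq_add (hπι : ∀ e, π (ι e) = e)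
    (hnorm : ∀ x, ‖x‖ = ‖π x‖ + ‖x - ι (π x)‖) (e : E) : ‖ι e‖ = ‖e‖ := by
  simpa [hπι] using hnorm (ι e)

theorem eq_section_of_norm_le_norm_proj (hnorm : ∀ x, ‖x‖ = ‖π x‖ + ‖x - ι (π x)‖) {z : X}
    (hz : ‖z‖ ≤ ‖π z‖) : z = ι (π z) := by
  have : ‖z - ι (π z)‖ ≤ 0 := by linarith [hnorm z]
  exact sub_eq_zero.mp (norm_le_zero_iff.mp this)

theorem IsRigidlyNarrowWrt.isRigidStrongDaugavet_of_lSummand (hπι : ∀ e, π (ι e) = e)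
    (hnorm : ∀ x, ‖x‖ = ‖π x‖ + ‖x - ι (π x)‖) (ΓE : Set (E →L[ℝ] ℝ))
    (hΓE_norm : ∀ f ∈ ΓE, ‖f‖ ≤ 1) (hΓE_bdry : ∀ e : E, ∃ f ∈ ΓE, f e = ‖e‖)
    {Γ : Set (X →L[ℝ] ℝ)} (hΓ : ∀ f ∈ ΓE, f.comp π ∈ Γ) {T : X →L[ℝ] Y}
    (hT : IsRigidlyNarrowWrt T Γ) {S : E →L[ℝ] Y} (hS : ∀ e, S e = T (ι e)) :
    IsRigidStrongDaugavet S := by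
  intro x y hx hy
  obtain ⟨f, hfΓ, hfy⟩ := hΓE_bdry y
  obtain ⟨z, hz, hxz, hTz, hfz⟩ := hT (ι x) (ι y)
    (by rw [norm_section_eq_of_norm_eq_add hπι hnorm, hx])
    (by rw [norm_section_eq_of_norm_eq_add hπι hnorm, hy]) _ (hΓ f hfΓ)
  have hfπz : f (π z) = 1 := by
    simp only [ContinuousLinearMap.comp_apply, map_sub, hπι, hfy, hy] at hfz
    linarith
  have hπz_ge : 1 ≤ ‖π z‖ :=
    calc 1 = f (π z) := hfπz.symm
      _ ≤ ‖f‖ * ‖π z‖ := (le_abs_self _).trans (f.le_opNorm _)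
      _ ≤ ‖π z‖ := mul_le_of_le_one_left (norm_nonneg _) (hΓE_norm f hfΓ)
  have hzι : z = ι (π z) := eq_section_of_norm_le_norm_proj hnorm (hz ▸ hπz_ge)
  refine ⟨π z, ?_, ?_, ?_⟩
  · linarith [hnorm z, norm_nonneg (z - ι (π z))]
  · rwa [← norm_section_eq_of_norm_eq_add hπι hnorm, map_add, ← hzι]
  · rwa [hS, map_sub, ← hzι]

end LSummand

section OneSum

variable {X₁ X₂ Y : Type*} [NormedAddCommGroup X₁] [NormedSpace ℝ X₁]
    [NormedAddCommGroup X₂] [NormedSpace ℝ X₂] [NormedAddCommGroup Y] [NormedSpace ℝ Y]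
    (Γ₁ : Set (X₁ →L[ℝ] ℝ)) (Γ₂ : Set (X₂ →L[ℝ] ℝ)) {Γ : Set (WithLp 1 (X₁ × X₂) →L[ℝ] ℝ)}
    {T : WithLp 1 (X₁ × X₂) →L[ℝ] Y}

theorem IsRigidlyNarrowWrt.isRigidStrongDaugavet_fst_oneSum
    (hΓ₁_norm : ∀ f ∈ Γ₁, ‖f‖ ≤ 1) (hΓ₁_bdry : ∀ x₁ : X₁, ∃ f ∈ Γ₁, f x₁ = ‖x₁‖)
    (hΓ : ∀ f ∈ Γ₁, f.comp ((ContinuousLinearMap.fst ℝ X₁ X₂).comp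
      (WithLp.prodContinuousLinearEquiv 1 ℝ X₁ X₂ : WithLp 1 (X₁ × X₂) →L[ℝ] X₁ × X₂)) ∈ Γ)
    (hT : IsRigidlyNarrowWrt T Γ) {T₁ : X₁ →L[ℝ] Y}
    (hT₁ : ∀ x₁ : X₁, T₁ x₁ = T ((WithLp.prodContinuousLinearEquiv 1 ℝ X₁ X₂).symm (x₁, 0))) :
    IsRigidStrongDaugavet T₁ :=
  IsRigidlyNarrowWrt.isRigidStrongDaugavet_of_lSummand
    (ι := (WithLp.prodContinuousLinearEquiv 1 ℝ X₁ X₂).symm.toContinuousLinearMap.comp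
      (ContinuousLinearMap.inl ℝ X₁ X₂)) (fun _ ↦ rfl)
    (fun x ↦ by simp [WithLp.prod_norm_eq_of_L1]) Γ₁ hΓ₁_norm hΓ₁_bdry hΓ hT hT₁

theorem IsRigidlyNarrowWrt.isRigidStrongDaugavet_snd_oneSum
    (hΓ₂_norm : ∀ f ∈ Γ₂, ‖f‖ ≤ 1) (hΓ₂_bdry : ∀ x₂ : X₂, ∃ f ∈ Γ₂, f x₂ = ‖x₂‖)
    (hΓ : ∀ f ∈ Γ₂, f.comp ((ContinuousLinearMap.snd ℝ X₁ X₂).comp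
      (WithLp.prodContinuousLinearEquiv 1 ℝ X₁ X₂ : WithLp 1 (X₁ × X₂) →L[ℝ] X₁ × X₂)) ∈ Γ)
    (hT : IsRigidlyNarrowWrt T Γ) {T₂ : X₂ →L[ℝ] Y}
    (hT₂ : ∀ x₂ : X₂, T₂ x₂ = T ((WithLp.prodContinuousLinearEquiv 1 ℝ X₁ X₂).symm (0, x₂))) :
    IsRigidStrongDaugavet T₂ :=
  IsRigidlyNarrowWrt.isRigidStrongDaugavet_of_lSummand
    (ι := (WithLp.prodContinuousLinearEquiv 1 ℝ X₁ X₂).symm.toContinuousLinearMap.comp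
      (ContinuousLinearMap.inr ℝ X₁ X₂)) (fun _ ↦ rfl)
    (fun x ↦ by simp [WithLp.prod_norm_eq_of_L1, add_comm]) Γ₂ hΓ₂_norm hΓ₂_bdry hΓ hT hT₂

end OneSum

theorem restrictions_rigidStrongDaugavet_of_rigidlyNarrow_oneSum_general
    {X₁ X₂ Y : Type*}
    [NormedAddCommGroup X₁] [NormedSpace ℝ X₁]
    [NormedAddCommGroup X₂] [NormedSpace ℝ X₂]
    [NormedAddCommGroup Y] [NormedSpace ℝ Y]
    (Γ₁ : Set (X₁ →L[ℝ] ℝ)) (Γ₂ : Set (X₂ →L[ℝ] ℝ))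
    (hΓ₁sphere : ∀ f ∈ Γ₁, ‖f‖ = 1)
    (hΓ₂sphere : ∀ f ∈ Γ₂, ‖f‖ = 1)
    (hΓ₁bdry : ∀ x₁ : X₁, ∃ f ∈ Γ₁, f x₁ = ‖x₁‖)
    (hΓ₂bdry : ∀ x₂ : X₂, ∃ f ∈ Γ₂, f x₂ = ‖x₂‖)
    (Γ : Set (WithLp 1 (X₁ × X₂) →L[ℝ] ℝ))
    (hΓ : Γ = {g | ∃ f ∈ Γ₁, g = f.comp ((ContinuousLinearMap.fst ℝ X₁ X₂).comp
            (WithLp.prodContinuousLinearEquiv 1 ℝ X₁ X₂ : WithLp 1 (X₁ × X₂) →L[ℝ] X₁ × X₂))} ∪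
        {g | ∃ f ∈ Γ₂, g = f.comp ((ContinuousLinearMap.snd ℝ X₁ X₂).comp
            (WithLp.prodContinuousLinearEquiv 1 ℝ X₁ X₂ : WithLp 1 (X₁ × X₂) →L[ℝ] X₁ × X₂))})
    (T : WithLp 1 (X₁ × X₂) →L[ℝ] Y)
    (T₁ : X₁ →L[ℝ] Y) (T₂ : X₂ →L[ℝ] Y)
    (hT₁ : ∀ x₁ : X₁, T₁ x₁ = T ((WithLp.prodContinuousLinearEquiv 1 ℝ X₁ X₂).symm (x₁, 0)))
    (hT₂ : ∀ x₂ : X₂, T₂ x₂ = T ((WithLp.prodContinuousLinearEquiv 1 ℝ X₁ X₂).symm (0, x₂)))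
    (hT : IsRigidlyNarrowWrt T Γ) :
    IsRigidStrongDaugavet T₁ ∧ IsRigidStrongDaugavet T₂ :=
  ⟨hT.isRigidStrongDaugavet_fst_oneSum Γ₁ (fun f hf ↦ (hΓ₁sphere f hf).le) hΓ₁bdry
      (fun f hf ↦ hΓ ▸ Or.inl ⟨f, hf, rfl⟩) hT₁,
    hT.isRigidStrongDaugavet_snd_oneSum Γ₂ (fun f hf ↦ (hΓ₂sphere f hf).le) hΓ₂bdry
      (fun f hf ↦ hΓ ▸ Or.inr ⟨f, hf, rfl⟩) hT₂⟩

/-- Let `X = X₁ ⊕₁ X₂`, let `Γⱼ ⊆ S(Xⱼ*)` be boundaries for `Xⱼ`, and let `Γ` consist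
of the functionals `(x₁, x₂) ↦ f (x₁)` for `f ∈ Γ₁` and `(x₁, x₂) ↦ f (x₂)` for
`f ∈ Γ₂`. If `T : X → Y` is rigidly narrow with respect to `Γ`, then the restrictions
`T₁` and `T₂` of `T` are rigid strong Daugavet operators. -/
theorem restrictions_rigidStrongDaugavet_of_rigidlyNarrow_oneSum
    {X₁ X₂ Y : Type*}
    [NormedAddCommGroup X₁] [NormedSpace ℝ X₁] [CompleteSpace X₁]
    [NormedAddCommGroup X₂] [NormedSpace ℝ X₂] [CompleteSpace X₂]
    [NormedAddCommGroup Y] [NormedSpace ℝ Y] [CompleteSpace Y]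
    (Γ₁ : Set (X₁ →L[ℝ] ℝ)) (Γ₂ : Set (X₂ →L[ℝ] ℝ))
    (hΓ₁sphere : ∀ f ∈ Γ₁, ‖f‖ = 1)
    (hΓ₂sphere : ∀ f ∈ Γ₂, ‖f‖ = 1)
    (hΓ₁bdry : ∀ x₁ : X₁, ∃ f ∈ Γ₁, f x₁ = ‖x₁‖)
    (hΓ₂bdry : ∀ x₂ : X₂, ∃ f ∈ Γ₂, f x₂ = ‖x₂‖)
    (Γ : Set (WithLp 1 (X₁ × X₂) →L[ℝ] ℝ))
    (hΓ : Γ = {g | ∃ f ∈ Γ₁, g = f.comp ((ContinuousLinearMap.fst ℝ X₁ X₂).comp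
            (WithLp.prodContinuousLinearEquiv 1 ℝ X₁ X₂ : WithLp 1 (X₁ × X₂) →L[ℝ] X₁ × X₂))} ∪
        {g | ∃ f ∈ Γ₂, g = f.comp ((ContinuousLinearMap.snd ℝ X₁ X₂).comp
            (WithLp.prodContinuousLinearEquiv 1 ℝ X₁ X₂ : WithLp 1 (X₁ × X₂) →L[ℝ] X₁ × X₂))})
    (T : WithLp 1 (X₁ × X₂) →L[ℝ] Y)
    (T₁ : X₁ →L[ℝ] Y) (T₂ : X₂ →L[ℝ] Y)
    (hT₁ : ∀ x₁ : X₁, T₁ x₁ = T ((WithLp.prodContinuousLinearEquiv 1 ℝ X₁ X₂).symm (x₁, 0)))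
    (hT₂ : ∀ x₂ : X₂, T₂ x₂ = T ((WithLp.prodContinuousLinearEquiv 1 ℝ X₁ X₂).symm (0, x₂)))
    (hT : IsRigidlyNarrowWrt T Γ) :
    IsRigidStrongDaugavet T₁ ∧ IsRigidStrongDaugavet T₂ :=
  restrictions_rigidStrongDaugavet_of_rigidlyNarrow_oneSum_general Γ₁ Γ₂ hΓ₁sphere hΓ₂sphere hΓ₁bdry
    hΓ₂bdry Γ hΓ T T₁ T₂ hT₁ hT₂ hT
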